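/- arXiv:2111.03683 — 8 statements merged into one kernel-verified Lean document; each statement's English description precedes it below -/
import Mathlib

section
/- If a finite graph H satisfies property Δ-(*), then the chromatic number of H is at most 2Δ-2. -/
/-- Property Δ-(*): there exist sets `R0, R1 ⊆ V(G)` with no edge between them such that
the induced subgraph on the complement of each `Ri` is `(Δ-1)`-colorable. -/
def PropertyStar {V : Type*} (G : SimpleGraph V) (Δ : ℕ) : Prop :=
  ∃ R0 R1 : Set V,
    (∀ a ∈ R0, ∀ b ∈ R1, ¬ G.Adj a b) ∧
    (G.induce R0ᶜ).Colorable (Δ - 1) ∧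
    (G.induce R1ᶜ).Colorable (Δ - 1)

/-- If a finite graph `H` satisfies property Δ-(*), then `χ(H) ≤ 2Δ - 2`. -/
theorem stmt_1 {V : Type*} [Fintype V] (G : SimpleGraph V) (Δ : ℕ) (hΔ : 2 < Δ)
    (h : PropertyStar G Δ) : G.Colorable (2 * Δ - 2) := by
  obtain ⟨R0, R1, hsep, ⟨c0⟩, ⟨c1⟩⟩ := h
  rw [SimpleGraph.colorable_iff_exists_bdd_nat_coloring]
  classical
  refine ⟨SimpleGraph.Coloring.mk
    (fun v => if hv : v ∈ R0ᶜ then (c0 ⟨v, hv⟩ : ℕ)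
      else if hv' : v ∈ R1ᶜ then (Δ - 1) + (c1 ⟨v, hv'⟩ : ℕ) else (Δ - 1)) ?_, ?_⟩
  · intro u v huv
    by_cases hu : u ∈ R0ᶜ <;> by_cases hv : v ∈ R0ᶜ
    · simp only [dif_pos hu, dif_pos hv]
      have := c0.valid (show (G.induce R0ᶜ).Adj ⟨u, hu⟩ ⟨v, hv⟩ from huv)
      exact fun he => this (Fin.ext he)
    · have h1 := (c0 ⟨u, hu⟩).isLt
      simp only [dif_pos hu, dif_neg hv]
      by_cases hv' : v ∈ R1ᶜ <;> simp [hv'] <;> omega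
    · have h1 := (c0 ⟨v, hv⟩).isLt
      simp only [dif_pos hv, dif_neg hu]
      by_cases hu' : u ∈ R1ᶜ <;> simp [hu'] <;> omega
    · -- both in R0
      have hu0 : u ∈ R0 := by simpa using hu
      have hv0 : v ∈ R0 := by simpa using hv
      by_cases hu' : u ∈ R1ᶜ <;> by_cases hv' : v ∈ R1ᶜ
      · simp only [dif_neg hu, dif_neg hv, dif_pos hu', dif_pos hv']
        have := c1.valid (show (G.induce R1ᶜ).Adj ⟨u, hu'⟩ ⟨v, hv'⟩ from huv)
        intro he
        exact this (Fin.ext (by omega))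
      · exact absurd huv (hsep u hu0 v (by simpa using hv'))
      · exact absurd huv.symm (hsep v hv0 u (by simpa using hu'))
      · exact absurd huv (hsep u hu0 v (by simpa using hv'))
  · intro v
    show (if hv : v ∈ R0ᶜ then (c0 ⟨v, hv⟩ : ℕ)
      else if hv' : v ∈ R1ᶜ then (Δ - 1) + (c1 ⟨v, hv'⟩ : ℕ) else (Δ - 1)) < 2 * Δ - 2
    split_ifs with hv hv'
    · have := (c0 ⟨v, hv⟩).isLt; omega
    · have := (c1 ⟨v, hv'⟩).isLt; omega
    · omega
end

section
/- The graph H_Δ satisfies property Δ-(*), witnessed by R0 = V0 ∪ {†} and R1 = V1 ∪ {†}. -/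
/-- Vertices of `H_Δ` (with `n = Δ - 1`): `V0 ⊕ V1 ⊕ P ⊕ {†}`. -/
abbrev HVert (n : ℕ) := (Fin n ⊕ Fin n) ⊕ ((Fin n × Fin n) ⊕ Unit)

/-- One-directional adjacency relation generating `H_Δ`. -/
def HRel (n : ℕ) : HVert n → HVert n → Prop
  | Sum.inl (Sum.inl _), Sum.inl (Sum.inl _) => True
  | Sum.inl (Sum.inr _), Sum.inl (Sum.inr _) => True
  | Sum.inr (Sum.inl (i, j)), Sum.inr (Sum.inl (i', j')) => i ≠ i' ∧ j ≠ j'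
  | Sum.inr (Sum.inr _), Sum.inr (Sum.inl _) => True
  | Sum.inl (Sum.inl i), Sum.inr (Sum.inl (i', _)) => i' ≠ i
  | Sum.inl (Sum.inr j), Sum.inr (Sum.inl (_, j')) => j' ≠ j
  | _, _ => False

/-- The graph `H_Δ` with `n = Δ - 1`. -/
def HGraph (n : ℕ) : SimpleGraph (HVert n) := SimpleGraph.fromRel (HRel n)

/-- `H_Δ` satisfies property Δ-(*), witnessed by `R0 = V0 ∪ {†}` and `R1 = V1 ∪ {†}`. -/
theorem stmt_4 (Δ : ℕ) (hΔ : 2 < Δ) :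
    ∀ R0 R1 : Set (HVert (Δ - 1)),
      R0 = Set.range (fun i : Fin (Δ - 1) => (Sum.inl (Sum.inl i) : HVert (Δ - 1)))
            ∪ {Sum.inr (Sum.inr ())} →
      R1 = Set.range (fun j : Fin (Δ - 1) => (Sum.inl (Sum.inr j) : HVert (Δ - 1)))
            ∪ {Sum.inr (Sum.inr ())} →
      (∀ a ∈ R0, ∀ b ∈ R1, ¬ (HGraph (Δ - 1)).Adj a b) ∧
      ((HGraph (Δ - 1)).induce R0ᶜ).Colorable (Δ - 1) ∧
      ((HGraph (Δ - 1)).induce R1ᶜ).Colorable (Δ - 1) := by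
  have hn : 0 < Δ - 1 := by omega
  set n := Δ - 1 with hdef
  set d : Fin n := ⟨0, hn⟩ with hd
  intro R0 R1 h0 h1
  subst h0 h1
  refine ⟨?_, ?_, ?_⟩
  · rintro a (⟨i, rfl⟩ | rfl) b (⟨j, rfl⟩ | rfl) hadj <;>
      simp [HGraph, SimpleGraph.fromRel_adj, HRel] at hadj
  · refine ⟨SimpleGraph.Coloring.mk
      (fun v => Sum.elim (Sum.elim (fun _ => d) id)
        (Sum.elim (fun p => p.2) (fun _ => d)) v.1) ?_⟩
    rintro ⟨u, hu⟩ ⟨v, hv⟩ hadj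
    simp only [Set.mem_compl_iff, Set.mem_union, Set.mem_range, Set.mem_singleton_iff,
      not_or, not_exists] at hu hv
    simp only [SimpleGraph.comap_adj, Function.Embedding.coe_subtype,
      HGraph, SimpleGraph.fromRel_adj, HRel] at hadj
    obtain ((i|j)|(⟨i,j⟩|u)) := u
    · exact absurd rfl (hu.1 i)
    all_goals obtain ((i'|j')|(⟨i',j'⟩|v)) := v
    all_goals first
      | exact absurd rfl (hv.1 _) | exact absurd rfl hu.2 | exact absurd rfl hv.2
      | (simp only [HRel, Sum.elim_inl, Sum.elim_inr, id_eq, ne_eq] at hadj ⊢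
         aesop)
  · refine ⟨SimpleGraph.Coloring.mk
      (fun v => Sum.elim (Sum.elim id (fun _ => d))
        (Sum.elim (fun p => p.1) (fun _ => d)) v.1) ?_⟩
    rintro ⟨u, hu⟩ ⟨v, hv⟩ hadj
    simp only [Set.mem_compl_iff, Set.mem_union, Set.mem_range, Set.mem_singleton_iff,
      not_or, not_exists] at hu hv
    simp only [SimpleGraph.comap_adj, Function.Embedding.coe_subtype,
      HGraph, SimpleGraph.fromRel_adj, HRel] at hadj
    obtain ((i|j)|(⟨i,j⟩|u)) := u
    case inl.inr => exact absurd rfl (hu.1 j)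
    all_goals obtain ((i'|j')|(⟨i',j'⟩|v)) := v
    all_goals first
      | exact absurd rfl (hv.1 _) | exact absurd rfl hu.2 | exact absurd rfl hv.2
      | (simp only [HRel, Sum.elim_inl, Sum.elim_inr, id_eq, ne_eq] at hadj ⊢
         aesop)
end

section
/- The chromatic number of the graph H_Δ is exactly 2Δ-2. -/
/-!
With `n = Δ - 1`, two disjoint palettes of size `n` suffice: `(i, j) ∈ P` takes the colour of
`i ∈ V0`, which it is not adjacent to, and `†` any colour of `V1`.

Conversely, in a proper colouring the cliques `V0` and `V1` use `n` colours each; let `k` of them be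
shared and let `f` colours be used on neither, so there are `2n - k + f` colours. A product vertex
`(i, j)` can reuse only the colour of `i ∈ V0` or of `j ∈ V1`. Writing the shared colours as
`s = c(i_s) = c(j_s)`, for a derangement `σ` of them the vertices `(i_s, j_{σ s})` form a `k`-clique
in the free colours, so `f ≥ k` when `k ≥ 2`; when `k = 1`, the vertex `†` forces `f ≥ 1`.
-/

lemma Equiv.Perm.exists_forall_ne_self {α : Type*} [Fintype α]
    (h : 2 ≤ Fintype.card α) : ∃ σ : Equiv.Perm α, ∀ a, σ a ≠ a := by
  let e := Fintype.equivFin α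
  refine ⟨e.trans ((finRotate _).trans e.symm), fun a ha => ?_⟩
  have hmem : e a ∈ (finRotate (Fintype.card α)).support := by
    simp [support_finRotate_of_le h]
  exact Equiv.Perm.mem_support.mp hmem (e.symm_apply_eq.mp ha)

namespace HGraph

variable {n : ℕ}

abbrev v0 (i : Fin n) : HVert n := .inl (.inl i)
abbrev v1 (j : Fin n) : HVert n := .inl (.inr j)
abbrev pt (i j : Fin n) : HVert n := .inr (.inl (i, j))
abbrev dagger : HVert n := .inr (.inr ())

variable {i i' j j' : Fin n}

lemma adj_v0_v0 (h : i ≠ i') : (HGraph n).Adj (v0 i) (v0 i') := by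
  simp [HGraph, HRel, h]

lemma adj_v1_v1 (h : j ≠ j') : (HGraph n).Adj (v1 j) (v1 j') := by
  simp [HGraph, HRel, h]

lemma adj_v0_pt (h : i ≠ i') : (HGraph n).Adj (v0 i) (pt i' j) := by
  simp [HGraph, HRel, h.symm]

lemma adj_v1_pt (h : j ≠ j') : (HGraph n).Adj (v1 j) (pt i j') := by
  simp [HGraph, HRel, h.symm]

lemma adj_pt_pt (hi : i ≠ i') (hj : j ≠ j') : (HGraph n).Adj (pt i j) (pt i' j') := by
  simp [HGraph, HRel, hi, hj]

lemma adj_dagger_pt : (HGraph n).Adj dagger (pt i j) := by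
  simp [HGraph, HRel]

def leftColoring (i₀ : Fin n) : (HGraph n).Coloring (Fin n ⊕ Fin n) :=
  SimpleGraph.Coloring.mk
    (fun | .inl (.inl i) => .inl i
         | .inl (.inr j) => .inr j
         | .inr (.inl (i, _)) => .inl i
         | .inr (.inr _) => .inr i₀)
    (by
      rintro ((i | j) | (⟨i, j⟩ | _)) ((i' | j') | (⟨i', j'⟩ | _)) hadj <;>
        simp_all [HGraph, HRel, eq_comm])

lemma colorable (hn : n ≠ 0) : (HGraph n).Colorable (2 * n) := by
  simpa [two_mul] using (leftColoring ⟨0, Nat.pos_of_ne_zero hn⟩).colorable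

section Coloring

open Finset

variable {κ : Type*} (C : (HGraph n).Coloring κ)

lemma injective_color_v0 : Function.Injective (C ∘ v0) := fun i i' h => by
  by_contra hne
  exact C.valid (adj_v0_v0 hne) h

lemma injective_color_v1 : Function.Injective (C ∘ v1) := fun j j' h => by
  by_contra hne
  exact C.valid (adj_v1_v1 hne) h

variable {C}

lemma eq_of_color_pt_eq_color_v0 (h : C (pt i j) = C (v0 i')) : i' = i := by
  by_contra hne
  exact C.valid (adj_v0_pt hne) h.symm

lemma eq_of_color_pt_eq_color_v1 (h : C (pt i j) = C (v1 j')) : j' = j := by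
  by_contra hne
  exact C.valid (adj_v1_pt hne) h.symm

variable [DecidableEq κ] (C)

def colorsV0 : Finset κ := univ.image (C ∘ v0)

def colorsV1 : Finset κ := univ.image (C ∘ v1)

lemma card_colorsV0 : #(colorsV0 C) = n := by
  simp [colorsV0, card_image_of_injective _ (injective_color_v0 C)]

lemma card_colorsV1 : #(colorsV1 C) = n := by
  simp [colorsV1, card_image_of_injective _ (injective_color_v1 C)]

variable [Fintype κ]

def freeColors : Finset κ := univ \ (colorsV0 C ∪ colorsV1 C)

variable {C}

lemma color_pt_mem_freeColors (hij : C (v0 i) = C (v1 j)) (hij' : C (v0 i') = C (v1 j'))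
    (hj : j ≠ j') : C (pt i j') ∈ freeColors C := by
  simp only [freeColors, colorsV0, colorsV1, mem_sdiff, mem_univ, mem_union, mem_image,
    Function.comp_apply, true_and, not_or, not_exists]
  constructor
  · intro i'' h
    obtain rfl := eq_of_color_pt_eq_color_v0 h.symm
    exact C.valid (adj_v1_pt hj) (hij.symm.trans h)
  · intro j'' h
    obtain rfl := eq_of_color_pt_eq_color_v1 h.symm
    obtain rfl := eq_of_color_pt_eq_color_v0 (h.symm.trans hij'.symm)
    exact hj (injective_color_v1 C (hij.symm.trans hij'))

variable (C)

lemma card_inter_le_card_freeColors_of_two_le (h : 2 ≤ #(colorsV0 C ∩ colorsV1 C)) :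
    #(colorsV0 C ∩ colorsV1 C) ≤ #(freeColors C) := by
  set S := colorsV0 C ∩ colorsV1 C
  have hv0 : ∀ s : S, ∃ i, C (v0 i) = s := fun s => by
    simpa [colorsV0] using (mem_inter.mp s.2).1
  have hv1 : ∀ s : S, ∃ j, C (v1 j) = s := fun s => by
    simpa [colorsV1] using (mem_inter.mp s.2).2
  choose a ha using hv0
  choose b hb using hv1
  have ha_inj : Function.Injective a := fun s t hst => Subtype.ext <| by
    rw [← ha s, ← ha t, hst]
  have hb_inj : Function.Injective b := fun s t hst => Subtype.ext <| by
    rw [← hb s, ← hb t, hst]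
  have hmatch : ∀ s, C (v0 (a s)) = C (v1 (b s)) := fun s => (ha s).trans (hb s).symm
  obtain ⟨σ, hσ⟩ := Equiv.Perm.exists_forall_ne_self (α := S) (by simpa using h)
  calc #S = #(univ : Finset S) := by simp
    _ ≤ #(freeColors C) := by
      refine card_le_card_of_injOn (fun s => C (pt (a s) (b (σ s))))
        (fun s _ => color_pt_mem_freeColors (hmatch s) (hmatch (σ s)) (hb_inj.ne (hσ s).symm))
        (fun s _ t _ hst => ?_)
      by_contra hne
      exact C.valid (adj_pt_pt (ha_inj.ne hne) (hb_inj.ne (σ.injective.ne hne))) hst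

/-- If `C (v0 i₀) = C (v1 j₀)` and there are no free colours, then the row through `j₀` and the
column through `i₀` of the product repeat all colours of `V0` and `V1`, leaving none for `†`. -/
lemma freeColors_nonempty (h : (colorsV0 C ∩ colorsV1 C).Nonempty) :
    (freeColors C).Nonempty := by
  obtain ⟨s, hs⟩ := h
  obtain ⟨⟨i₀, hi₀⟩, ⟨j₀, hj₀⟩⟩ : (∃ i, C (v0 i) = s) ∧ ∃ j, C (v1 j) = s := by
    simpa [colorsV0, colorsV1] using hs
  by_contra hfree
  rw [not_nonempty_iff_eq_empty, freeColors, sdiff_eq_empty_iff_subset] at hfree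
  have hcover : ∀ c, (∃ i, C (v0 i) = c) ∨ ∃ j, C (v1 j) = c := fun c => by
    simpa [colorsV0, colorsV1] using hfree (mem_univ c)
  have hrow : ∀ i, C (pt i j₀) = C (v0 i) := fun i => by
    rcases hcover (C (pt i j₀)) with ⟨i', h⟩ | ⟨j', h⟩
    · rw [← h, eq_of_color_pt_eq_color_v0 h.symm]
    · obtain rfl := eq_of_color_pt_eq_color_v1 h.symm
      rw [← h, hj₀, ← hi₀, eq_of_color_pt_eq_color_v0 (h.symm.trans (hj₀.trans hi₀.symm))]
  have hcol : ∀ j, C (pt i₀ j) = C (v1 j) := fun j => by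
    rcases hcover (C (pt i₀ j)) with ⟨i', h⟩ | ⟨j', h⟩
    · obtain rfl := eq_of_color_pt_eq_color_v0 h.symm
      rw [← h, hi₀, ← hj₀, eq_of_color_pt_eq_color_v1 (h.symm.trans (hi₀.trans hj₀.symm))]
    · rw [← h, eq_of_color_pt_eq_color_v1 h.symm]
  rcases hcover (C dagger) with ⟨i, h⟩ | ⟨j, h⟩
  · exact C.valid adj_dagger_pt (h.symm.trans (hrow i).symm)
  · exact C.valid adj_dagger_pt (h.symm.trans (hcol j).symm)

lemma card_inter_le_card_freeColors : #(colorsV0 C ∩ colorsV1 C) ≤ #(freeColors C) := by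
  rcases Nat.lt_or_ge #(colorsV0 C ∩ colorsV1 C) 2 with h | h
  · rcases Nat.eq_zero_or_pos #(colorsV0 C ∩ colorsV1 C) with h0 | h0
    · omega
    · have := (freeColors_nonempty C (card_pos.mp h0)).card_pos
      omega
  · exact card_inter_le_card_freeColors_of_two_le C h

end Coloring

open Finset in
lemma two_mul_le_card {κ : Type*} [Fintype κ] (C : (HGraph n).Coloring κ) :
    2 * n ≤ Fintype.card κ := by
  classical
  have hunion := card_union_add_card_inter (colorsV0 C) (colorsV1 C)
  have hfree : #(freeColors C) + #(colorsV0 C ∪ colorsV1 C) = Fintype.card κ :=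
    card_sdiff_add_card_eq_card (subset_univ _)
  have := card_inter_le_card_freeColors C
  rw [card_colorsV0, card_colorsV1] at hunion
  omega

lemma chromaticNumber_eq (hn : n ≠ 0) : (HGraph n).chromaticNumber = (2 * n : ℕ) := by
  refine le_antisymm (colorable hn).chromaticNumber_le
    (SimpleGraph.le_chromaticNumber_iff_coloring.mpr fun m C => ?_)
  simpa using two_mul_le_card C

end HGraph

/-- The chromatic number of `H_Δ` is exactly `2Δ - 2`. -/
theorem stmt_5 (Δ : ℕ) (hΔ : 2 < Δ) :
    (HGraph (Δ - 1)).chromaticNumber = ((2 * Δ - 2 : ℕ) : ℕ∞) := by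
  rw [HGraph.chromaticNumber_eq (by omega), show 2 * (Δ - 1) = 2 * Δ - 2 by omega]
end

section
/- The chromatic number of H_Δ is at least 2Δ-2: every proper coloring of H_Δ uses at least 2Δ-2 colors. -/
lemma key {n m : ℕ} (a b : Fin n → Fin m) (T : Fin m) (c : Fin n × Fin n → Fin m)
    (ha : Function.Injective a) (hb : Function.Injective b)
    (hT : ∀ q, c q ≠ T)
    (hA : ∀ i q, c q = a i → q.1 = i)
    (hB : ∀ j q, c q = b j → q.2 = j)
    (hP : ∀ q q' : Fin n × Fin n, c q = c q' → q.1 = q'.1 ∨ q.2 = q'.2) :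
    2 * n ≤ m := by
  classical
  by_contra hm
  push_neg at hm
  set RowConst : Fin m → Prop := fun x => ∀ q q', c q = x → c q' = x → q.1 = q'.1 with hRC
  set ColConst : Fin m → Prop := fun x => ∀ q q', c q = x → c q' = x → q.2 = q'.2 with hCC
  have dich : ∀ x, RowConst x ∨ ColConst x := by
    intro x
    by_cases hr : RowConst x
    · exact Or.inl hr
    · right
      have hex : ∃ q1 q2, c q1 = x ∧ c q2 = x ∧ q1.1 ≠ q2.1 := by
        by_contra hno
        push_neg at hno
        exact hr (fun q q' hq hq' => hno q q' hq hq')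
      obtain ⟨q1, q2, h1, h2, h12⟩ := hex
      have e12 : q1.2 = q2.2 := (hP q1 q2 (h1.trans h2.symm)).resolve_left h12
      have aux : ∀ q, c q = x → q.2 = q1.2 := by
        intro q hq
        rcases hP q q1 (hq.trans h1.symm) with e | e
        · rcases hP q q2 (hq.trans h2.symm) with e' | e'
          · exact absurd (e.symm.trans e') h12
          · exact e'.trans e12.symm
        · exact e
      intro q q' hq hq'
      rw [aux q hq, aux q' hq']
  set U : Finset (Fin m) := Finset.image c Finset.univ with hU
  have hcU : ∀ q, c q ∈ U := fun q => Finset.mem_image_of_mem c (Finset.mem_univ q)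
  have hTU : T ∉ U := by
    rw [hU]
    simp only [Finset.mem_image, Finset.mem_univ, true_and, not_exists]
    exact fun q => hT q
  have hUcard : U.card + 1 ≤ m := by
    have h1 : (insert T U).card ≤ (Finset.univ : Finset (Fin m)).card := Finset.card_le_card (Finset.subset_univ _)
    rw [Finset.card_insert_of_notMem hTU, Finset.card_univ, Fintype.card_fin] at h1
    omega
  set ColH : Finset (Fin m) := U.filter (fun x => (∃ j, x = b j) ∨ ¬ RowConst x) with hColH
  have F1 : ∀ x ∈ ColH, ColConst x := by
    intro x hx
    rw [hColH, Finset.mem_filter] at hx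
    rcases hx.2 with ⟨j, rfl⟩ | hnr
    · intro q q' hq hq'; rw [hB j q hq, hB j q' hq']
    · exact (dich x).resolve_left hnr
  have F2 : ∀ x ∈ U, x ∉ ColH → RowConst x ∧ ∀ j, x ≠ b j := by
    intro x hxU hx
    rw [hColH, Finset.mem_filter] at hx
    push_neg at hx
    obtain ⟨h1, h2⟩ := hx hxU
    exact ⟨h2, fun j e => h1 j e⟩
  have hsplit : (U \ ColH).card + ColH.card = U.card :=
    Finset.card_sdiff_add_card_eq_card (Finset.filter_subset _ _)
  by_cases hcase : ColH.card < n
  · -- every row has a cell with a non-ColH color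
    have hx : ∀ i, ∃ j, c (i, j) ∉ ColH := by
      intro i
      by_contra hc
      push_neg at hc
      have hinj : Function.Injective (fun j => c (i, j)) := by
        intro j j' e
        exact F1 _ (hc j) (i, j) (i, j') rfl e.symm
      have := Finset.card_le_card_of_injOn (s := (Finset.univ : Finset (Fin n))) (t := ColH) (fun j => c (i, j)) (fun j _ => hc j) (hinj.injOn)
      rw [Finset.card_univ, Fintype.card_fin] at this
      omega
    choose jx hjx using hx
    set x : Fin n → Fin m := fun i => c (i, jx i) with hxdef
    have hxprop : ∀ i, RowConst (x i) ∧ ∀ j, x i ≠ b j := fun i => F2 _ (hcU _) (hjx i)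
    have hxinj : Function.Injective x := by
      intro i i' e
      exact (hxprop i).1 (i, jx i) (i', jx i') rfl e.symm
    have hbig : Function.Injective (Sum.elim x b) := by
      intro s s' e
      match s, s' with
      | Sum.inl i, Sum.inl i' => exact congrArg Sum.inl (hxinj (by simpa using e))
      | Sum.inr j, Sum.inr j' => exact congrArg Sum.inr (hb (by simpa using e))
      | Sum.inl i, Sum.inr j => exact absurd (by simpa using e) ((hxprop i).2 j)
      | Sum.inr j, Sum.inl i => exact absurd (by simpa using e.symm) ((hxprop i).2 j)
    have := Fintype.card_le_of_injective _ hbig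
    simp [Fintype.card_sum, Fintype.card_fin] at this
    omega
  · -- |ColH| ≥ n, so |U \ ColH| ≤ n - 2
    push_neg at hcase
    set RowH' : Finset (Fin m) := U.filter (fun x => (∃ i, x = a i) ∨ ¬ ColConst x) with hRowH'
    have G1 : ∀ x ∈ RowH', RowConst x := by
      intro x hx
      rw [hRowH', Finset.mem_filter] at hx
      rcases hx.2 with ⟨i, rfl⟩ | hnc
      · intro q q' hq hq'; rw [hA i q hq, hA i q' hq']
      · exact (dich x).resolve_right hnc
    have G2 : ∀ x ∈ U, x ∉ RowH' → ColConst x ∧ ∀ i, x ≠ a i := by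
      intro x hxU hx
      rw [hRowH', Finset.mem_filter] at hx
      push_neg at hx
      obtain ⟨h1, h2⟩ := hx hxU
      exact ⟨h2, fun i e => h1 i e⟩
    -- each column has a cell with non-RowH' color
    have hy : ∀ j, ∃ i, c (i, j) ∉ RowH' := by
      intro j
      by_contra hc
      push_neg at hc
      have hinj : Function.Injective (fun i => c (i, j)) := by
        intro i i' e
        exact G1 _ (hc i) (i, j) (i', j) rfl e.symm
      have hmaps : ∀ i, c (i, j) ∈ insert (b j) (U \ ColH) := by
        intro i
        by_cases hcc : c (i, j) ∈ ColH
        · -- then ColConst, and also in RowH' so (= a i0) hence in A∩B, = b j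
          have hcol := F1 _ hcc
          have hx := hc i
          rw [hRowH', Finset.mem_filter] at hx
          rcases hx.2 with ⟨i0, he⟩ | hnc
          · -- c (i,j) = a i0 and in ColH: either = b j0 or ¬RowConst
            rw [hColH, Finset.mem_filter] at hcc
            rcases hcc.2 with ⟨j0, he'⟩ | hnr
            · have : j = j0 := hB j0 (i, j) he'
              rw [Finset.mem_insert]; left; rw [he', this]
            · exact absurd (fun q q' hq hq' => (hA i0 q (hq.trans he)).trans (hA i0 q' (hq'.trans he)).symm) hnr
          · exact absurd hcol hnc
        · exact Finset.mem_insert_of_mem (Finset.mem_sdiff.mpr ⟨hcU _, hcc⟩)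
      have hcard := Finset.card_le_card_of_injOn (s := (Finset.univ : Finset (Fin n))) (t := insert (b j) (U \ ColH)) (fun i => c (i, j)) (fun i _ => hmaps i) hinj.injOn
      have h2 : (insert (b j) (U \ ColH)).card ≤ (U \ ColH).card + 1 := Finset.card_insert_le _ _
      rw [Finset.card_univ, Fintype.card_fin] at hcard
      omega
    choose iy hiy using hy
    set y : Fin n → Fin m := fun j => c (iy j, j) with hydef
    have hyprop : ∀ j, ColConst (y j) ∧ ∀ i, y j ≠ a i := fun j => G2 _ (hcU _) (hiy j)
    have hyinj : Function.Injective y := by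
      intro j j' e
      exact (hyprop j).1 (iy j, j) (iy j', j') rfl e.symm
    have hbig : Function.Injective (Sum.elim a y) := by
      intro s s' e
      match s, s' with
      | Sum.inl i, Sum.inl i' => exact congrArg Sum.inl (ha (by simpa using e))
      | Sum.inr j, Sum.inr j' => exact congrArg Sum.inr (hyinj (by simpa using e))
      | Sum.inl i, Sum.inr j => exact absurd (by simpa using e.symm) ((hyprop j).2 i)
      | Sum.inr j, Sum.inl i => exact absurd (by simpa using e) ((hyprop j).2 i)
    have := Fintype.card_le_of_injective _ hbig
    simp [Fintype.card_sum, Fintype.card_fin] at this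
    omega

/-- Every proper coloring of `H_Δ` uses at least `2Δ - 2` colors. -/
theorem stmt_6 (Δ : ℕ) (hΔ : 2 < Δ) (m : ℕ) (h : (HGraph (Δ - 1)).Colorable m) :
    2 * Δ - 2 ≤ m := by
  obtain ⟨C⟩ := h
  set n := Δ - 1 with hn
  have hadj : ∀ x y : HVert n, x ≠ y → (HRel n x y ∨ HRel n y x) → C x ≠ C y := by
    intro x y h1 h2
    exact C.valid ((SimpleGraph.fromRel_adj _ _ _).mpr ⟨h1, h2⟩)
  have key2 : 2 * n ≤ m :=
    key (fun i => C (Sum.inl (Sum.inl i))) (fun j => C (Sum.inl (Sum.inr j)))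
      (C (Sum.inr (Sum.inr ()))) (fun q => C (Sum.inr (Sum.inl q)))
      (by
        intro i i' e
        by_contra hne
        exact hadj (Sum.inl (Sum.inl i)) (Sum.inl (Sum.inl i')) (by simp [hne]) (Or.inl trivial) e)
      (by
        intro j j' e
        by_contra hne
        exact hadj (Sum.inl (Sum.inr j)) (Sum.inl (Sum.inr j')) (by simp [hne]) (Or.inl trivial) e)
      (by
        intro q
        exact hadj (Sum.inr (Sum.inl q)) (Sum.inr (Sum.inr ())) (by simp) (Or.inr trivial))
      (by
        intro i q e
        by_contra hne
        obtain ⟨i', j⟩ := q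
        simp only at hne
        exact hadj (Sum.inl (Sum.inl i)) (Sum.inr (Sum.inl (i', j))) (by simp) (Or.inl hne) e.symm)
      (by
        intro j q e
        by_contra hne
        obtain ⟨i, j'⟩ := q
        simp only at hne
        exact hadj (Sum.inl (Sum.inr j)) (Sum.inr (Sum.inl (i, j'))) (by simp) (Or.inl hne) e.symm)
      (by
        intro q q' e
        by_contra hne
        push_neg at hne
        obtain ⟨h1, h2⟩ := hne
        obtain ⟨i, j⟩ := q; obtain ⟨i', j'⟩ := q'
        simp only at h1 h2
        exact hadj (Sum.inr (Sum.inl (i, j))) (Sum.inr (Sum.inl (i', j'))) (by simp [h1]) (Or.inl ⟨h1, h2⟩) e)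
  omega
end

section
/- A finite graph G satisfies property Δ-(*) if and only if G admits a graph homomorphism to H_Δ. -/
/-!
A pair `(R0, R1)` as in property (*), together with colourings of the complements, is the same as
a pair of partial colourings of `G` with `Δ - 1` colours whose uncoloured sets `R0`, `R1` span no
edge between them. Such pairs are exactly the homomorphisms into the graph on
`Option (Fin (Δ - 1)) × Option (Fin (Δ - 1))` recording these constraints, and that graph is
`H_Δ` relabelled: `V0`, `V1`, `P`, `†` are the pairs `(i, -)`, `(-, j)`, `(i, j)`, `(-, -)`.
-/

namespace SimpleGraph

variable {V α : Type*} (G : SimpleGraph V)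

/-- `none` means uncoloured. -/
def IsPartialColoring (c : V → Option α) : Prop :=
  ∀ ⦃v w⦄, G.Adj v w → ∀ i ∈ c v, ∀ j ∈ c w, i ≠ j

variable {G}

def IsPartialColoring.coloring {c : V → Option α} (hc : G.IsPartialColoring c) :
    (G.induce {v | c v = none}ᶜ).Coloring α :=
  Coloring.mk (fun v => (c v).get (Option.isSome_iff_ne_none.2 v.2)) fun {v w} hvw =>
    hc (by simpa using hvw) _ (Option.get_mem _) _ (Option.get_mem _)

open Classical in
noncomputable def Coloring.extendNone {s : Set V} (C : (G.induce sᶜ).Coloring α) :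
    V → Option α :=
  fun v => if h : v ∈ s then none else some (C ⟨v, h⟩)

theorem Coloring.isPartialColoring_extendNone {s : Set V} (C : (G.induce sᶜ).Coloring α) :
    G.IsPartialColoring C.extendNone := by
  intro v w hvw i hi j hj
  simp only [extendNone, Option.mem_def, Option.dite_none_left_eq_some, Option.some.injEq] at hi hj
  obtain ⟨hv, rfl⟩ := hi
  obtain ⟨hw, rfl⟩ := hj
  exact C.valid (by simpa using hvw)

@[simp]
theorem Coloring.extendNone_eq_none {s : Set V} (C : (G.induce sᶜ).Coloring α) (v : V) :
    C.extendNone v = none ↔ v ∈ s := by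
  by_cases hv : v ∈ s <;> simp [extendNone, hv]

end SimpleGraph

open SimpleGraph

namespace PropertyStar

/-- `none` in the first (second) coordinate marks membership in `R0` (`R1`). -/
def universalGraph (α : Type*) : SimpleGraph (Option α × Option α) where
  Adj p q := (∀ i ∈ p.1, ∀ j ∈ q.1, i ≠ j) ∧ (∀ i ∈ p.2, ∀ j ∈ q.2, i ≠ j) ∧
    (p.1.isSome ∨ q.2.isSome) ∧ (p.2.isSome ∨ q.1.isSome)
  symm.symm _ _ := fun ⟨h1, h2, h3, h4⟩ =>
    ⟨fun i hi j hj => (h1 j hj i hi).symm, fun i hi j hj => (h2 j hj i hi).symm,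
      h4.symm, h3.symm⟩
  loopless.irrefl p := by
    rintro ⟨h1, h2, h3, -⟩
    rcases h3 with h | h
    · obtain ⟨i, hi⟩ := Option.isSome_iff_exists.1 h
      exact h1 i hi i hi rfl
    · obtain ⟨i, hi⟩ := Option.isSome_iff_exists.1 h
      exact h2 i hi i hi rfl

theorem nonempty_hom_universalGraph_iff {V α : Type*} (G : SimpleGraph V) :
    Nonempty (G →g universalGraph α) ↔
      ∃ R0 R1 : Set V, (∀ a ∈ R0, ∀ b ∈ R1, ¬ G.Adj a b) ∧
        Nonempty ((G.induce R0ᶜ).Coloring α) ∧ Nonempty ((G.induce R1ᶜ).Coloring α) := by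
  constructor
  · rintro ⟨f⟩
    have h0 : G.IsPartialColoring fun v => (f v).1 := fun v w hvw => (f.map_adj hvw).1
    have h1 : G.IsPartialColoring fun v => (f v).2 := fun v w hvw => (f.map_adj hvw).2.1
    refine ⟨{v | (f v).1 = none}, {v | (f v).2 = none}, fun a ha b hb hab => ?_,
      ⟨h0.coloring⟩, ⟨h1.coloring⟩⟩
    have h := (f.map_adj hab).2.2.1
    rw [show (f a).1 = none from ha, show (f b).2 = none from hb] at h
    simp at h
  · rintro ⟨R0, R1, hR, ⟨C0⟩, ⟨C1⟩⟩
    refine ⟨⟨fun v => (C0.extendNone v, C1.extendNone v), fun {v w} hvw => ?_⟩⟩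
    refine ⟨C0.isPartialColoring_extendNone hvw, C1.isPartialColoring_extendNone hvw, ?_, ?_⟩
    all_goals simp only [Option.isSome_iff_ne_none, ne_eq, Coloring.extendNone_eq_none]
    · exact not_and_or.1 fun h => hR v h.1 w h.2 hvw
    · exact not_and_or.1 fun h => hR w h.2 v h.1 hvw.symm

end PropertyStar

def HGraph.isoUniversalGraph (n : ℕ) : HGraph n ≃g PropertyStar.universalGraph (Fin n) where
  toFun
    | Sum.inl (Sum.inl i) => (some i, none)
    | Sum.inl (Sum.inr j) => (none, some j)
    | Sum.inr (Sum.inl (i, j)) => (some i, some j)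
    | Sum.inr (Sum.inr ()) => (none, none)
  invFun
    | (some i, none) => Sum.inl (Sum.inl i)
    | (none, some j) => Sum.inl (Sum.inr j)
    | (some i, some j) => Sum.inr (Sum.inl (i, j))
    | (none, none) => Sum.inr (Sum.inr ())
  left_inv := by rintro ((i | j) | (⟨i, j⟩ | ⟨⟩)) <;> rfl
  right_inv := by rintro ⟨_ | i, _ | j⟩ <;> rfl
  map_rel_iff' := by
    rintro ((i | j) | (⟨i, j⟩ | ⟨⟩)) ((i' | j') | (⟨i', j'⟩ | ⟨⟩)) <;>
      simp [HGraph, HRel, PropertyStar.universalGraph] <;> grind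

theorem stmt_7_general {V : Type*} (G : SimpleGraph V) (Δ : ℕ) :
    PropertyStar G Δ ↔ Nonempty (G →g HGraph (Δ - 1)) := by
  have hom_iff : Nonempty (G →g HGraph (Δ - 1)) ↔
      Nonempty (G →g PropertyStar.universalGraph (Fin (Δ - 1))) :=
    ⟨fun ⟨f⟩ => ⟨(HGraph.isoUniversalGraph _).toHom.comp f⟩,
      fun ⟨f⟩ => ⟨(HGraph.isoUniversalGraph _).symm.toHom.comp f⟩⟩
  rw [hom_iff, PropertyStar.nonempty_hom_universalGraph_iff]
  rfl

/-- A finite graph `G` satisfies property Δ-(*) iff it admits a homomorphism to `H_Δ`. -/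
theorem stmt_7 {V : Type*} [Fintype V] (G : SimpleGraph V) (Δ : ℕ) (hΔ : 2 < Δ) :
    PropertyStar G Δ ↔ Nonempty (G →g HGraph (Δ - 1)) :=
  stmt_7_general G Δ
end

section
/- For every Δ > 2 and every 2 ≤ ℓ ≤ 2Δ-2, there exists a finite graph H satisfying property Δ-(*) with chromatic number exactly ℓ. -/
/-!
Call `G` an `(a, b)`-graph if it has two sets `R0, R1` with no edge between them such that
`G - R0` is `a`-colorable and `G - R1` is `b`-colorable. Adding a universal vertex raises `χ`,
`a` and `b` by one (keep `R0`, `R1`). The Mycielskian raises `χ` by one but only `b`: remove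
`R0`, its mirror and the apex, which leaves a graph folding onto `G - R0`; remove only the
original copy of `R1`, and give all mirrors one fresh color. Starting from `K₁` with
`R0 = R1 = V`, cones give `K_{c+1}` as a `(c, c)`-graph, and `k` Mycielski steps on each side
then give a `(c + k, c + k)`-graph with `χ = c + 1 + 2k`; taking `k = ℓ - Δ` reaches every
`ℓ ≤ 2Δ - 2`.
-/

namespace SimpleGraph

variable {V W α : Type*} {G : SimpleGraph V} {H : SimpleGraph W}

lemma chromaticNumber_eq_add_one_of_colorable_iff [Nonempty W]
    (hcol : ∀ n, H.Colorable (n + 1) ↔ G.Colorable n) :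
    H.chromaticNumber = G.chromaticNumber + 1 := by
  have not_colorable_zero : ¬ H.Colorable 0 := fun h =>
    not_isEmpty_of_nonempty W (colorable_zero_iff.1 h)
  cases hχ : G.chromaticNumber using ENat.recTopCoe with
  | top =>
    by_contra hH
    obtain ⟨_ | k, hk⟩ := chromaticNumber_ne_top_iff_exists.1 hH
    · exact not_colorable_zero hk
    · exact chromaticNumber_ne_top_iff_exists.2 ⟨k, (hcol k).1 hk⟩ hχ
  | coe n =>
    refine chromaticNumber_eq_iff_colorable_not_colorable.2
      ⟨(hcol n).2 (chromaticNumber_le_iff_colorable.1 hχ.le), fun h => ?_⟩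
    obtain _ | k := n
    · exact not_colorable_zero h
    · have := ((hcol k).1 h).chromaticNumber_le
      rw [hχ] at this
      norm_cast at this
      omega

/-- `none` is the apex. -/
def cone (G : SimpleGraph V) : SimpleGraph (Option V) where
  Adj
    | some u, some v => G.Adj u v
    | none, none => False
    | _, _ => True
  symm := ⟨by
    rintro (_ | u) (_ | v) h
    exacts [h, trivial, trivial, h.symm]⟩
  loopless := ⟨by
    rintro (_ | u) h
    exacts [h, G.irrefl h]⟩

@[simp] lemma cone_adj_some_some {u v : V} : G.cone.Adj (some u) (some v) ↔ G.Adj u v := .rfl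
@[simp] lemma cone_adj_some_none {v : V} : G.cone.Adj (some v) none := trivial

def Coloring.cone (C : G.Coloring α) : G.cone.Coloring (Option α) :=
  Coloring.mk (Option.map C) <| by
    rintro (_ | u) (_ | v) h
    · exact absurd h G.cone.irrefl
    all_goals simp_all [C.valid]

def Coloring.ofCone (C : G.cone.Coloring α) : G.Coloring {a // a ≠ C none} :=
  Coloring.mk (fun v => ⟨C (some v), C.valid cone_adj_some_none⟩) fun h => by
    simpa using C.valid (cone_adj_some_some.2 h)

lemma cone_colorable_succ_iff {n : ℕ} : G.cone.Colorable (n + 1) ↔ G.Colorable n := by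
  refine ⟨fun ⟨C⟩ => ?_, fun ⟨C⟩ => ?_⟩
  · simpa using C.ofCone.colorable
  · simpa using C.cone.colorable

lemma chromaticNumber_cone : G.cone.chromaticNumber = G.chromaticNumber + 1 :=
  chromaticNumber_eq_add_one_of_colorable_iff fun _ => cone_colorable_succ_iff

lemma Colorable.cone_induce_compl {R : Set V} {n : ℕ} (h : (G.induce Rᶜ).Colorable n) :
    (G.cone.induce (some '' R)ᶜ).Colorable (n + 1) := by
  obtain ⟨C⟩ := h
  let c : ↥(some '' R)ᶜ → Option (Fin n)
    | ⟨none, _⟩ => none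
    | ⟨some v, hv⟩ => some (C ⟨v, fun h => hv (Set.mem_image_of_mem _ h)⟩)
  refine Coloring.colorable (Coloring.mk c ?_) |>.mono (by simp)
  rintro ⟨_ | u, hu⟩ ⟨_ | v, hv⟩ h
  · exact absurd h (G.cone.induce _).irrefl
  all_goals simp_all [c, C.valid]

/-- `some (.inl v)` is the vertex `v`, `some (.inr v)` its mirror and `none` the apex. -/
def mycielskian (G : SimpleGraph V) : SimpleGraph (Option (V ⊕ V)) where
  Adj
    | some (.inl u), some (.inl v) | some (.inl u), some (.inr v)
    | some (.inr u), some (.inl v) => G.Adj u v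
    | none, some (.inr _) | some (.inr _), none => True
    | _, _ => False
  symm := ⟨by
    rintro (_ | u | u) (_ | v | v) h
    all_goals first | exact h.symm | exact h⟩
  loopless := ⟨by
    rintro (_ | u | u) h
    all_goals first | exact h | exact G.irrefl h⟩

def mycielskianToCone (G : SimpleGraph V) : G.mycielskian →g G.cone where
  toFun := Option.map (Sum.elim id id)
  map_rel' := by
    rintro (_ | u | u) (_ | v | v) h
    all_goals first | exact h | trivial

/-- Every vertex colored like the apex takes the color of its mirror instead. -/
def Coloring.ofMycielskian [DecidableEq α] (C : G.mycielskian.Coloring α) :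
    G.Coloring {a // a ≠ C none} :=
  Coloring.mk
    (fun v => if h : C (some (.inl v)) = C none then
      ⟨C (some (.inr v)), C.valid (show G.mycielskian.Adj _ none from trivial)⟩
      else ⟨C (some (.inl v)), h⟩)
    fun {u v} huv => by
      have hll : C (some (.inl u)) ≠ C (some (.inl v)) := C.valid huv
      have hrl : C (some (.inr u)) ≠ C (some (.inl v)) := C.valid huv
      have hlr : C (some (.inl u)) ≠ C (some (.inr v)) := C.valid huv
      split_ifs <;> simp_all

lemma mycielskian_colorable_succ_iff {n : ℕ} :
    G.mycielskian.Colorable (n + 1) ↔ G.Colorable n := by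
  classical
  refine ⟨fun ⟨C⟩ => ?_, fun h => (cone_colorable_succ_iff.2 h).of_hom G.mycielskianToCone⟩
  simpa using C.ofMycielskian.colorable

lemma chromaticNumber_mycielskian :
    G.mycielskian.chromaticNumber = G.chromaticNumber + 1 :=
  chromaticNumber_eq_add_one_of_colorable_iff fun _ => mycielskian_colorable_succ_iff

lemma Colorable.mycielskian_induce_compl_mirrored {R : Set V} {n : ℕ}
    (h : (G.induce Rᶜ).Colorable n) :
    (G.mycielskian.induce (insert none (some '' (Sum.elim id id ⁻¹' R)))ᶜ).Colorable n := by
  obtain ⟨C⟩ := h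
  let c : ↥(insert none (some '' (Sum.elim id id ⁻¹' R)))ᶜ → Fin n
    | ⟨none, h⟩ => absurd (Set.mem_insert _ _) h
    | ⟨some x, hx⟩ => C ⟨Sum.elim id id x, fun h => hx (.inr (Set.mem_image_of_mem _ h))⟩
  refine ⟨Coloring.mk c ?_⟩
  rintro ⟨_ | u | u, hu⟩ ⟨_ | v | v, hv⟩ h
  all_goals first
    | exact absurd (Set.mem_insert _ _) hu
    | exact absurd (Set.mem_insert _ _) hv
    | exact absurd h (G.mycielskian.induce _).irrefl
    | exact h.elim
    | exact C.valid h

lemma Colorable.mycielskian_induce_compl_original {R : Set V} {n : ℕ}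
    (h : (G.induce Rᶜ).Colorable (n + 1)) :
    (G.mycielskian.induce (some '' (Sum.inl '' R))ᶜ).Colorable (n + 2) := by
  obtain ⟨C⟩ := h
  let c : ↥(some '' (Sum.inl (β := V) '' R))ᶜ → Option (Fin (n + 1))
    | ⟨none, _⟩ => some 0
    | ⟨some (.inl v), hv⟩ =>
      some (C ⟨v, fun h => hv (Set.mem_image_of_mem _ (Set.mem_image_of_mem _ h))⟩)
    | ⟨some (.inr _), _⟩ => none
  refine Coloring.colorable (Coloring.mk c ?_) |>.mono (by simp)
  rintro ⟨_ | u | u, hu⟩ ⟨_ | v | v, hv⟩ h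
  all_goals first
    | exact absurd h (G.mycielskian.induce _).irrefl
    | exact h.elim
    | exact (Option.some_injective _).ne (C.valid h)
    | simp [c]

end SimpleGraph

open SimpleGraph

def PropertyStarAsymm {V : Type*} (G : SimpleGraph V) (a b : ℕ) : Prop :=
  ∃ R0 R1 : Set V,
    (∀ x ∈ R0, ∀ y ∈ R1, ¬ G.Adj x y) ∧
    (G.induce R0ᶜ).Colorable a ∧
    (G.induce R1ᶜ).Colorable b

namespace PropertyStarAsymm

variable {V : Type*} {G : SimpleGraph V} {a b : ℕ}

lemma symm (h : PropertyStarAsymm G a b) : PropertyStarAsymm G b a := by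
  obtain ⟨R0, R1, hR, h0, h1⟩ := h
  exact ⟨R1, R0, fun x hx y hy hxy => hR y hy x hx hxy.symm, h1, h0⟩

lemma mono {a' b' : ℕ} (h : PropertyStarAsymm G a b) (ha : a ≤ a') (hb : b ≤ b') :
    PropertyStarAsymm G a' b' := by
  obtain ⟨R0, R1, hR, h0, h1⟩ := h
  exact ⟨R0, R1, hR, h0.mono ha, h1.mono hb⟩

lemma cone (h : PropertyStarAsymm G a b) : PropertyStarAsymm G.cone (a + 1) (b + 1) := by
  obtain ⟨R0, R1, hR, h0, h1⟩ := h
  refine ⟨some '' R0, some '' R1, ?_, h0.cone_induce_compl, h1.cone_induce_compl⟩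
  rintro _ ⟨u, hu, rfl⟩ _ ⟨v, hv, rfl⟩
  exact hR u hu v hv

lemma mycielskian (h : PropertyStarAsymm G a (b + 1)) :
    PropertyStarAsymm G.mycielskian a (b + 2) := by
  obtain ⟨R0, R1, hR, h0, h1⟩ := h
  refine ⟨insert none (some '' (Sum.elim id id ⁻¹' R0)), some '' (Sum.inl '' R1), ?_,
    h0.mycielskian_induce_compl_mirrored, h1.mycielskian_induce_compl_original⟩
  rintro x hx _ ⟨_, ⟨v, hv, rfl⟩, rfl⟩
  rcases hx with rfl | ⟨u | u, hu, rfl⟩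
  · exact id
  all_goals exact hR u hu v hv

end PropertyStarAsymm

def Realizable (a b n : ℕ) : Prop :=
  ∃ (V : Type) (_ : Fintype V) (G : SimpleGraph V),
    PropertyStarAsymm G a b ∧ G.chromaticNumber = n

namespace Realizable

variable {a b n : ℕ}

lemma symm (h : Realizable a b n) : Realizable b a n := by
  obtain ⟨V, hV, G, hG, hχ⟩ := h
  exact ⟨V, hV, G, hG.symm, hχ⟩

lemma mono {a' b' : ℕ} (h : Realizable a b n) (ha : a ≤ a') (hb : b ≤ b') :
    Realizable a' b' n := by
  obtain ⟨V, hV, G, hG, hχ⟩ := h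
  exact ⟨V, hV, G, hG.mono ha hb, hχ⟩

lemma cone (h : Realizable a b n) : Realizable (a + 1) (b + 1) (n + 1) := by
  obtain ⟨V, hV, G, hG, hχ⟩ := h
  exact ⟨Option V, inferInstance, G.cone, hG.cone,
    by rw [chromaticNumber_cone, hχ]; push_cast; rfl⟩

lemma mycielskian (h : Realizable a (b + 1) n) : Realizable a (b + 2) (n + 1) := by
  obtain ⟨V, hV, G, hG, hχ⟩ := h
  exact ⟨Option (V ⊕ V), inferInstance, G.mycielskian, hG.mycielskian,
    by rw [chromaticNumber_mycielskian, hχ]; push_cast; rfl⟩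

lemma iterate_mycielskian (h : Realizable a (b + 1) n) (k : ℕ) :
    Realizable a (b + k + 1) (n + k) := by
  induction k with
  | zero => exact h
  | succ k ih => exact ih.mycielskian

end Realizable

lemma realizable_zero_zero_one : Realizable 0 0 1 := by
  refine ⟨Unit, inferInstance, ⊥, ⟨Set.univ, Set.univ, fun _ _ _ _ => id, ?_, ?_⟩,
    chromaticNumber_bot⟩ <;> exact colorable_zero_iff.2 (by simp)

lemma realizable_self_self_succ (c : ℕ) : Realizable c c (c + 1) := by
  induction c with
  | zero => exact realizable_zero_zero_one
  | succ c ih => exact ih.cone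

theorem stmt_9_general (Δ ℓ : ℕ) (hl2 : 2 ≤ ℓ) (hl : ℓ ≤ 2 * Δ - 2) :
    ∃ (V : Type) (_ : Fintype V) (H : SimpleGraph V),
      PropertyStar H Δ ∧ H.chromaticNumber = (ℓ : ℕ∞) := by
  obtain ⟨c, k, hck, rfl⟩ : ∃ c k, c + k + 1 ≤ Δ - 1 ∧ ℓ = c + 2 + 2 * k :=
    ⟨ℓ - 2 - 2 * (ℓ - Δ), ℓ - Δ, by omega, by omega⟩
  have h := ((realizable_self_self_succ (c + 1)).iterate_mycielskian k).symm.iterate_mycielskian k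
  rw [show c + 1 + 1 + k + k = c + 2 + 2 * k by ring] at h
  exact h.mono hck hck

/-- For every `Δ > 2` and `2 ≤ ℓ ≤ 2Δ - 2` there is a finite graph with property Δ-(*)
and chromatic number exactly `ℓ`. -/
theorem stmt_9 (Δ ℓ : ℕ) (hΔ : 2 < Δ) (hl2 : 2 ≤ ℓ) (hl : ℓ ≤ 2 * Δ - 2) :
    ∃ (V : Type) (_ : Fintype V) (H : SimpleGraph V),
      PropertyStar H Δ ∧ H.chromaticNumber = (ℓ : ℕ∞) :=
  stmt_9_general Δ ℓ hl2 hl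
end

section
/- If h is a graph homomorphism from a tree T to an acyclic graph H such that any two edges of T sharing a vertex are mapped to distinct edges of H (e.g., h preserves a proper edge coloring), then h is injective. -/
/-!
Along a path of `T` consecutive edges are distinct, and a homomorphism that is injective on
every neighbourhood keeps consecutive image edges distinct. In an acyclic graph a walk without
backtracking is a path, so the image of a path of `T` is a path of `H`; since `T` is connected,
any two vertices with the same image are joined by a path whose image is a path, hence equal.
-/

namespace SimpleGraph

variable {V W : Type*} {G : SimpleGraph V} {G' : SimpleGraph W}

lemma Hom.edge_ne_of_injOn_neighborSet (f : G →g G') (hf : ∀ v, Set.InjOn f (G.neighborSet v))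
    {u v w : V} (huv : G.Adj u v) (hvw : G.Adj v w) (hne : s(u, v) ≠ s(v, w)) :
    s(f u, f v) ≠ s(f v, f w) := by
  have huw : u ≠ w := by rintro rfl; exact hne Sym2.eq_swap
  have hfuw : f u ≠ f w := fun h ↦ huw (hf v huv.symm hvw h)
  rw [Ne, Sym2.eq_iff]
  rintro (⟨huv', -⟩ | ⟨huw', -⟩)
  · exact (f.map_adj huv).ne huv'
  · exact hfuw huw'

lemma Walk.isChain_ne_edges_map (f : G →g G') (hf : ∀ v, Set.InjOn f (G.neighborSet v))
    {u v : V} (p : G.Walk u v) (hp : p.edges.IsChain (· ≠ ·)) :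
    (p.map f).edges.IsChain (· ≠ ·) := by
  induction p with
  | nil => simp
  | cons huv p ih =>
    cases p with
    | nil => simp
    | cons hvw q =>
      simp only [Walk.map_cons, Walk.edges_cons, List.isChain_cons_cons] at hp ih ⊢
      exact ⟨f.edge_ne_of_injOn_neighborSet hf huv hvw hp.1, ih hp.2⟩

lemma IsAcyclic.isPath_map (hG' : G'.IsAcyclic) (f : G →g G')
    (hf : ∀ v, Set.InjOn f (G.neighborSet v)) {u v : V} {p : G.Walk u v} (hp : p.IsPath) :
    (p.map f).IsPath :=
  (hG'.isPath_iff_isChain _).mpr <|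
    p.isChain_ne_edges_map f hf (Walk.edges_nodup_of_support_nodup hp.support_nodup).isChain

lemma Preconnected.injective_of_isAcyclic (hG : G.Preconnected) (hG' : G'.IsAcyclic)
    (f : G →g G') (hf : ∀ v, Set.InjOn f (G.neighborSet v)) : Function.Injective f := by
  intro a b hab
  obtain ⟨p, hp⟩ := (hG a b).exists_isPath
  have hnodup : (p.support.map f).Nodup := by
    rw [← Walk.support_map, ← Walk.isPath_def]
    exact hG'.isPath_map f hf hp
  exact List.inj_on_of_nodup_map hnodup p.start_mem_support p.end_mem_support hab

end SimpleGraph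

/-- A homomorphism from a tree to an acyclic graph that maps edges sharing a vertex to
distinct edges is injective. -/
theorem stmt_13 {V W : Type*} (T : SimpleGraph V) (H : SimpleGraph W)
    (hT : T.IsTree) (hH : H.IsAcyclic) (f : T →g H)
    (hc : ∀ x y z, T.Adj x y → T.Adj y z → x ≠ z → f x ≠ f z) :
    Function.Injective f :=
  hT.connected.preconnected.injective_of_isAcyclic hH f
    fun _ _ hx _ hz hxz ↦ by_contra fun hne ↦ hc _ _ _ (T.adj_symm hx) hz hne hxz
end

section
/- If a homomorphism h from a connected graph T to an acyclic graph H is not injective, then there exist vertices x, y, z of T with x adjacent to y, y adjacent to z, x ≠ z, and h(x) = h(z). -/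
open SimpleGraph

private lemma aux_first_edge {W : Type*} {H : SimpleGraph W} {u v w : W}
    (r : H.Walk u v) (hr : r.IsPath) (he : s(u, w) ∈ r.edges) :
    ∃ (h : H.Adj u w) (r' : H.Walk w v), r = Walk.cons h r' := by
  cases r with
  | nil => simp at he
  | @cons _ b _ h r' =>
    rw [Walk.edges_cons, List.mem_cons] at he
    rcases he with h1 | h2
    · rw [Sym2.eq_iff] at h1
      rcases h1 with ⟨-, rfl⟩ | ⟨rfl, rfl⟩
      · exact ⟨h, r', rfl⟩
      · exact absurd rfl h.ne
    · exact absurd (Walk.fst_mem_support_of_mem_edges r' h2)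
        ((Walk.cons_isPath_iff _ _).mp hr).2

private lemma aux_loop_nil {W : Type*} {H : SimpleGraph W} {u : W}
    {q : H.Walk u u} (h : q.IsPath) : q = Walk.nil := by
  cases q with
  | nil => rfl
  | cons hadj q' =>
    exact absurd (Walk.end_mem_support q')
      ((Walk.cons_isPath_iff _ _).mp h).2

private lemma aux_map_isPath {V W : Type*} {T : SimpleGraph V} {H : SimpleGraph W}
    (hH : H.IsAcyclic) (f : T →g H)
    (hgoal : ∀ x y z, T.Adj x y → T.Adj y z → x ≠ z → f x ≠ f z)
    {a b : V} (p : T.Walk a b) (hp : p.IsPath) : (p.map f).IsPath := by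
  classical
  induction p with
  | nil => simp
  | @cons a c b h p' ih =>
    rw [Walk.map_cons, Walk.cons_isPath_iff]
    rw [Walk.cons_isPath_iff] at hp
    obtain ⟨hp1, hp2⟩ := hp
    refine ⟨ih hp1, fun hfa => ?_⟩
    have hq : (p'.map f).IsPath := ih hp1
    set q' := p'.map f with hq'def
    have hr : (q'.takeUntil (f a) hfa).IsPath := hq.takeUntil hfa
    set r := q'.takeUntil (f a) hfa with hrdef
    have hadj : H.Adj (f a) (f c) := f.map_adj h
    have hedge : s(f a, f c) ∈ r.edges := by
      by_contra hedge
      exact hH _ (SimpleGraph.Path.cons_isCycle ⟨r, hr⟩ hadj hedge)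
    obtain ⟨h₁, r', hr'⟩ := aux_first_edge r hr (by rwa [Sym2.eq_swap] at hedge)
    have hr'path : r'.IsPath := by
      rw [hr'] at hr
      exact hr.of_cons
    have hr'nil : r' = Walk.nil := aux_loop_nil hr'path
    have hrlen : r.length = 1 := by rw [hr', hr'nil]; simp
    have hq1 : q'.getVert 1 = f a := by
      conv_lhs => rw [← q'.take_spec hfa]
      rw [Walk.getVert_append, hrdef.symm, hrlen]
      simp
    cases p' with
    | nil =>
      simp only [hq'def, Walk.map_nil, Walk.support_nil, List.mem_singleton] at hfa
      exact hadj.ne hfa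
    | @cons _ d _ hcd p'' =>
      have hfd : f d = f a := by
        rw [← hq1]
        simp [hq'def]
      have had : a ≠ d := by
        rintro rfl
        exact hp2 (by simp)
      exact hgoal a c d h hcd had hfd.symm

/-- If a homomorphism from a connected graph to an acyclic graph is not injective, then
there are `x ~ y ~ z` with `x ≠ z` and `f x = f z`. -/
theorem stmt_14 {V W : Type*} (T : SimpleGraph V) (H : SimpleGraph W)
    (hT : T.Connected) (hH : H.IsAcyclic) (f : T →g H)
    (hf : ¬ Function.Injective f) :
    ∃ x y z, T.Adj x y ∧ T.Adj y z ∧ x ≠ z ∧ f x = f z := by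
  classical
  by_contra hgoal
  push_neg at hgoal
  have hgoal' : ∀ x y z, T.Adj x y → T.Adj y z → x ≠ z → f x ≠ f z := by
    intro x y z h1 h2 h3
    exact hgoal x y z h1 h2 h3
  obtain ⟨u, v, huv, hne⟩ := Function.not_injective_iff.mp hf
  obtain ⟨w⟩ := hT.preconnected u v
  have hp : (w.toPath : T.Walk u v).IsPath := w.toPath.2
  set p := (w.toPath : T.Walk u v) with hpdef
  have hq : (p.map f).IsPath := aux_map_isPath hH f hgoal' p hp
  have hq' : ((p.map f).copy rfl huv.symm).IsPath := by rwa [Walk.isPath_copy]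
  have hnil := aux_loop_nil hq'
  have hlen : p.length = 0 := by
    have := congrArg Walk.length hnil
    simpa using this
  exact hne (Walk.eq_of_length_eq_zero hlen)
end
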